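/- Let L₁, L₂ be 1-dimensional vector spaces over 𝔽 and B: L₁ → L₂ an invertible linear map. Define B^⊙: L₁^⊙ → L₂^⊙ by B^⊗q on positive powers, id_𝔽 on the zero power, and ((B⁻¹)*)^⊗q on negative powers. Then B^⊙ is a morphism of dimensioned rings covering the identity on ℤ, and the assignment L ↦ L^⊙, B ↦ B^⊙ is functorial: (C∘B)^⊙ = C^⊙∘B^⊙ and (id_L)^⊙ = id_{L^⊙}. -/

import Mathlib

open scoped TensorProduct

variable (𝔽 : Type*) [Field 𝔽]

/-- The `n`-th power of the line `L`: tensor powers of `L` for `n ≥ 0` and tensor powers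
of the dual line `L*` for `n < 0`. -/
def LPow (L : Type*) [AddCommGroup L] [Module 𝔽 L] : ℤ → Type _ := fun n =>
  Int.rec (fun k => TensorPower 𝔽 k L) (fun k => TensorPower 𝔽 (k + 1) (Module.Dual 𝔽 L)) n

noncomputable instance (L : Type*) [AddCommGroup L] [Module 𝔽 L] (n : ℤ) :
    AddCommGroup (LPow 𝔽 L n) := by
  cases n with
  | ofNat k => exact inferInstanceAs (AddCommGroup (TensorPower 𝔽 k L))
  | negSucc k => exact inferInstanceAs (AddCommGroup (TensorPower 𝔽 (k + 1) (Module.Dual 𝔽 L)))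

noncomputable instance (L : Type*) [AddCommGroup L] [Module 𝔽 L] (n : ℤ) :
    Module 𝔽 (LPow 𝔽 L n) := by
  cases n with
  | ofNat k => exact inferInstanceAs (Module 𝔽 (TensorPower 𝔽 k L))
  | negSucc k => exact inferInstanceAs (Module 𝔽 (TensorPower 𝔽 (k + 1) (Module.Dual 𝔽 L)))

variable {L L₁ L₂ L₃ : Type*} [AddCommGroup L] [Module 𝔽 L]
  [AddCommGroup L₁] [Module 𝔽 L₁] [AddCommGroup L₂] [Module 𝔽 L₂]
  [AddCommGroup L₃] [Module 𝔽 L₃]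

/-- The identity element of the power of a line: the empty tensor product in `L^0`. -/
noncomputable def LPowOne : LPow 𝔽 L 0 :=
  PiTensorProduct.tprod 𝔽 (fun i : Fin 0 => i.elim0)

/-- The multiplication `⊙` of the power dimensioned field `L^⊙` of a line: induced by the
tensor product (concatenation on powers of the same sign, canonical pairing on mixed
powers), unital, associative and commutative. -/
def IsPowerMul (mul : ∀ m n : ℤ, LPow 𝔽 L m →ₗ[𝔽] LPow 𝔽 L n →ₗ[𝔽] LPow 𝔽 L (m + n)) :
    Prop :=
  (∀ (k l : ℕ) (f : Fin k → L) (g : Fin l → L),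
    mul (Int.ofNat k) (Int.ofNat l)
        (PiTensorProduct.tprod 𝔽 f) (PiTensorProduct.tprod 𝔽 g) =
      PiTensorProduct.tprod 𝔽 (Fin.append f g)) ∧
  (∀ (k l : ℕ) (f : Fin (k + 1) → Module.Dual 𝔽 L) (g : Fin (l + 1) → Module.Dual 𝔽 L),
    mul (Int.negSucc k) (Int.negSucc l)
        (PiTensorProduct.tprod 𝔽 f) (PiTensorProduct.tprod 𝔽 g) =
      cast (congrArg (LPow 𝔽 L)
          (show Int.negSucc (k + 1 + l) = Int.negSucc k + Int.negSucc l by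
            rw [Int.negSucc_add_negSucc]; congr 1; omega))
        ((PiTensorProduct.tprod 𝔽 (Fin.append f g) :
          TensorPower 𝔽 (k + 1 + (l + 1)) (Module.Dual 𝔽 L)))) ∧
  (∀ (a : L) (β : Module.Dual 𝔽 L),
    mul (Int.ofNat 1) (Int.negSucc 0)
        (PiTensorProduct.tprod 𝔽 (fun _ => a)) (PiTensorProduct.tprod 𝔽 (fun _ => β)) =
      β a • LPowOne 𝔽) ∧
  (∀ (a : L) (β : Module.Dual 𝔽 L),
    mul (Int.negSucc 0) (Int.ofNat 1)
        (PiTensorProduct.tprod 𝔽 (fun _ => β)) (PiTensorProduct.tprod 𝔽 (fun _ => a)) =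
      β a • LPowOne 𝔽) ∧
  (∀ (n : ℤ) (x : LPow 𝔽 L n), HEq (mul 0 n (LPowOne 𝔽) x) x) ∧
  (∀ (n : ℤ) (x : LPow 𝔽 L n), HEq (mul n 0 x (LPowOne 𝔽)) x) ∧
  (∀ (m n k : ℤ) (x : LPow 𝔽 L m) (y : LPow 𝔽 L n) (z : LPow 𝔽 L k),
    HEq (mul (m + n) k (mul m n x y) z) (mul m (n + k) x (mul n k y z))) ∧
  (∀ (m n : ℤ) (x : LPow 𝔽 L m) (y : LPow 𝔽 L n), HEq (mul m n x y) (mul n m y x))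

/-- The power of an invertible linear map (a factor of lines) `B : L₁ → L₂`: `B^{⊗q}` on
positive powers, the identity of `𝔽` on the zero power, and `((B⁻¹)*)^{⊗q}` on negative
powers. -/
noncomputable def powMap (B : L₁ ≃ₗ[𝔽] L₂) : ∀ n : ℤ, LPow 𝔽 L₁ n →ₗ[𝔽] LPow 𝔽 L₂ n :=
  fun n =>
  Int.rec (fun k => PiTensorProduct.map (fun _ : Fin k => B.toLinearMap))
    (fun k => PiTensorProduct.map (fun _ : Fin (k + 1) => B.symm.toLinearMap.dualMap)) n


section Aux

open PiTensorProduct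

variable {𝔽 : Type*} [Field 𝔽] {L : Type*} [AddCommGroup L] [Module 𝔽 L]

/-- The canonical generator of each slice of `L^⊙` built from a vector and a covector. -/
noncomputable def genAux (e : L) (ε : Module.Dual 𝔽 L) : ∀ n : ℤ, LPow 𝔽 L n := fun n =>
  Int.rec (fun k => PiTensorProduct.tprod 𝔽 (fun _ : Fin k => e))
    (fun k => PiTensorProduct.tprod 𝔽 (fun _ : Fin (k + 1) => ε)) n

lemma genAux_ofNat (e : L) (ε : Module.Dual 𝔽 L) (k : ℕ) :
    genAux e ε (Int.ofNat k) = PiTensorProduct.tprod 𝔽 (fun _ : Fin k => e) := rfl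

lemma genAux_negSucc (e : L) (ε : Module.Dual 𝔽 L) (k : ℕ) :
    genAux e ε (Int.negSucc k) = PiTensorProduct.tprod 𝔽 (fun _ : Fin (k + 1) => ε) := rfl

lemma gen_heq (e : L) (ε : Module.Dual 𝔽 L) {s t : ℤ} (h : s = t) :
    HEq (genAux e ε s) (genAux e ε t) := by subst h; rfl

lemma gen_zero (e : L) (ε : Module.Dual 𝔽 L) : genAux e ε 0 = LPowOne 𝔽 := by
  show PiTensorProduct.tprod 𝔽 _ = PiTensorProduct.tprod 𝔽 _
  congr 1
  funext i
  exact i.elim0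

lemma mul_congr {mul : ∀ m n : ℤ, LPow 𝔽 L m →ₗ[𝔽] LPow 𝔽 L n →ₗ[𝔽] LPow 𝔽 L (m + n)}
    {m m' n n' : ℤ} (hm : m = m') (hn : n = n') {x : LPow 𝔽 L m} {x' : LPow 𝔽 L m'}
    {y : LPow 𝔽 L n} {y' : LPow 𝔽 L n'} (hx : HEq x x') (hy : HEq y y') :
    HEq (mul m n x y) (mul m' n' x' y') := by
  subst hm; subst hn; rw [eq_of_heq hx, eq_of_heq hy]

lemma append_const {M : Type*} (k l : ℕ) (c : M) :
    Fin.append (fun _ : Fin k => c) (fun _ : Fin l => c) = fun _ : Fin (k + l) => c := by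
  funext i
  cases i using Fin.addCases with
  | left j => rw [Fin.append_left]
  | right j => rw [Fin.append_right]

section GenMul

variable {mul : ∀ m n : ℤ, LPow 𝔽 L m →ₗ[𝔽] LPow 𝔽 L n →ₗ[𝔽] LPow 𝔽 L (m + n)}
  {e : L} {ε : Module.Dual 𝔽 L}

lemma key_pos (hmul : IsPowerMul 𝔽 mul) (k l : ℕ) :
    HEq (mul (Int.ofNat k) (Int.ofNat l) (genAux e ε (Int.ofNat k)) (genAux e ε (Int.ofNat l)))
      (genAux e ε (Int.ofNat (k + l))) := by
  refine heq_of_eq ?_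
  rw [genAux_ofNat, genAux_ofNat, hmul.1 k l, genAux_ofNat]
  show PiTensorProduct.tprod 𝔽 _ = PiTensorProduct.tprod 𝔽 _
  rw [append_const]

lemma key_neg (hmul : IsPowerMul 𝔽 mul) (k l : ℕ) :
    HEq (mul (Int.negSucc k) (Int.negSucc l)
        (genAux e ε (Int.negSucc k)) (genAux e ε (Int.negSucc l)))
      (genAux e ε (Int.negSucc (k + l + 1))) := by
  refine heq_of_eq ?_
  rw [genAux_negSucc, genAux_negSucc, hmul.2.1 k l]; refine cast_eq_iff_heq.mpr ?_
  refine HEq.trans (heq_of_eq ?_)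
    (gen_heq e ε (by simp only [Int.negSucc.injEq]; omega : Int.negSucc (k + 1 + l) = Int.negSucc (k + l + 1)))
  rw [genAux_negSucc]
  show PiTensorProduct.tprod 𝔽 _ =
    (PiTensorProduct.tprod 𝔽 (fun _ : Fin (k + 1 + (l + 1)) => ε) :
      TensorPower 𝔽 (k + 1 + (l + 1)) (Module.Dual 𝔽 L))
  rw [append_const]

lemma key_one_negOne (hmul : IsPowerMul 𝔽 mul) (hεe : ε e = 1) :
    HEq (mul (Int.ofNat 1) (Int.negSucc 0)
        (genAux e ε (Int.ofNat 1)) (genAux e ε (Int.negSucc 0)))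
      (genAux e ε (Int.ofNat 0)) := by
  refine heq_of_eq ?_
  rw [genAux_ofNat, genAux_negSucc, hmul.2.2.1 e ε, hεe]
  rw [one_smul]
  exact (gen_zero e ε).symm

lemma key_one_neg (hmul : IsPowerMul 𝔽 mul) (hεe : ε e = 1) (l : ℕ) :
    HEq (mul (Int.ofNat 1) (Int.negSucc l)
        (genAux e ε (Int.ofNat 1)) (genAux e ε (Int.negSucc l)))
      (genAux e ε (Int.ofNat 1 + Int.negSucc l)) := by
  cases l with
  | zero => exact key_one_negOne hmul hεe
  | succ j =>
      have A := hmul.2.2.2.2.2.2.1 (Int.ofNat 1) (Int.negSucc 0) (Int.negSucc j)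
        (genAux e ε (Int.ofNat 1)) (genAux e ε (Int.negSucc 0)) (genAux e ε (Int.negSucc j))
      have hL : HEq (mul (Int.ofNat 1 + Int.negSucc 0) (Int.negSucc j)
          (mul (Int.ofNat 1) (Int.negSucc 0)
            (genAux e ε (Int.ofNat 1)) (genAux e ε (Int.negSucc 0)))
          (genAux e ε (Int.negSucc j))) (genAux e ε (Int.negSucc j)) := by
        refine HEq.trans (mul_congr (rfl : Int.ofNat 1 + Int.negSucc 0 = 0) rfl
          (HEq.trans (key_one_negOne hmul hεe) (heq_of_eq (gen_zero e ε))) HEq.rfl) ?_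
        exact hmul.2.2.2.2.1 (Int.negSucc j) (genAux e ε (Int.negSucc j))
      have hR : HEq (mul (Int.ofNat 1) (Int.negSucc 0 + Int.negSucc j)
          (genAux e ε (Int.ofNat 1))
          (mul (Int.negSucc 0) (Int.negSucc j)
            (genAux e ε (Int.negSucc 0)) (genAux e ε (Int.negSucc j))))
          (mul (Int.ofNat 1) (Int.negSucc (j + 1)) (genAux e ε (Int.ofNat 1))
            (genAux e ε (Int.negSucc (j + 1)))) := by
        refine mul_congr (rfl : Int.ofNat 1 = Int.ofNat 1)
          (show Int.negSucc 0 + Int.negSucc j = Int.negSucc (j + 1) by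
            simp only [Int.negSucc_eq]; omega)
          (HEq.rfl (a := genAux e ε (Int.ofNat 1))) ?_
        exact (key_neg hmul 0 j).trans
          (gen_heq e ε (by simp only [Int.negSucc.injEq]; omega))
      exact (hR.symm.trans A.symm).trans hL

lemma key_pos_neg (hmul : IsPowerMul 𝔽 mul) (hεe : ε e = 1) (k l : ℕ) :
    HEq (mul (Int.ofNat k) (Int.negSucc l)
        (genAux e ε (Int.ofNat k)) (genAux e ε (Int.negSucc l)))
      (genAux e ε (Int.ofNat k + Int.negSucc l)) := by
  induction k generalizing l with
  | zero =>
      refine HEq.trans (mul_congr (rfl : Int.ofNat 0 = 0) rfl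
        (heq_of_eq (gen_zero e ε)) (HEq.rfl (a := genAux e ε (Int.negSucc l)))) ?_
      exact hmul.2.2.2.2.1 (Int.negSucc l) (genAux e ε (Int.negSucc l))
  | succ k ih =>
      have A := hmul.2.2.2.2.2.2.1 (Int.ofNat k) (Int.ofNat 1) (Int.negSucc l)
        (genAux e ε (Int.ofNat k)) (genAux e ε (Int.ofNat 1)) (genAux e ε (Int.negSucc l))
      have hL : HEq (mul (Int.ofNat k + Int.ofNat 1) (Int.negSucc l)
          (mul (Int.ofNat k) (Int.ofNat 1)
            (genAux e ε (Int.ofNat k)) (genAux e ε (Int.ofNat 1)))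
          (genAux e ε (Int.negSucc l)))
          (mul (Int.ofNat (k + 1)) (Int.negSucc l)
            (genAux e ε (Int.ofNat (k + 1))) (genAux e ε (Int.negSucc l))) :=
        mul_congr (rfl : Int.ofNat k + Int.ofNat 1 = Int.ofNat (k + 1)) rfl
          (key_pos hmul k 1) HEq.rfl
      have hR : HEq (mul (Int.ofNat k) (Int.ofNat 1 + Int.negSucc l)
          (genAux e ε (Int.ofNat k))
          (mul (Int.ofNat 1) (Int.negSucc l)
            (genAux e ε (Int.ofNat 1)) (genAux e ε (Int.negSucc l))))
          (genAux e ε (Int.ofNat (k + 1) + Int.negSucc l)) := by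
        cases l with
        | zero =>
            refine HEq.trans (mul_congr (rfl : Int.ofNat k = Int.ofNat k)
              (rfl : Int.ofNat 1 + Int.negSucc 0 = 0)
              (HEq.rfl (a := genAux e ε (Int.ofNat k)))
              (HEq.trans (key_one_neg hmul hεe 0) (heq_of_eq (gen_zero e ε)))) ?_
            refine HEq.trans (hmul.2.2.2.2.2.1 (Int.ofNat k) (genAux e ε (Int.ofNat k))) ?_
            exact gen_heq e ε (by simp only [Int.negSucc_eq, Int.ofNat_eq_natCast]; omega)
        | succ j =>
            refine HEq.trans (mul_congr (rfl : Int.ofNat k = Int.ofNat k)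
              (rfl : Int.ofNat 1 + Int.negSucc (j + 1) = Int.negSucc j)
              (HEq.rfl (a := genAux e ε (Int.ofNat k)))
              (key_one_neg hmul hεe (j + 1))) ?_
            refine HEq.trans (ih j) (gen_heq e ε ?_)
            simp only [Int.negSucc_eq, Int.ofNat_eq_natCast]
            omega
      exact (hL.symm.trans A).trans hR

lemma key_all (hmul : IsPowerMul 𝔽 mul) (hεe : ε e = 1) (m n : ℤ) :
    mul m n (genAux e ε m) (genAux e ε n) = genAux e ε (m + n) := by
  refine eq_of_heq ?_
  cases m with
  | ofNat k =>
      cases n with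
      | ofNat l => exact key_pos hmul k l
      | negSucc l => exact key_pos_neg hmul hεe k l
  | negSucc k =>
      cases n with
      | ofNat l =>
          refine HEq.trans (hmul.2.2.2.2.2.2.2 (Int.negSucc k) (Int.ofNat l)
            (genAux e ε (Int.negSucc k)) (genAux e ε (Int.ofNat l))) ?_
          exact HEq.trans (key_pos_neg hmul hεe l k) (gen_heq e ε (Int.add_comm _ _))
      | negSucc l =>
          exact (key_neg hmul k l).trans
            (gen_heq e ε (rfl : Int.negSucc (k + l + 1) = Int.negSucc k + Int.negSucc l))

end GenMul

lemma span_pow {M : Type*} [AddCommGroup M] [Module 𝔽 M] (b : Module.Basis (Fin 1) 𝔽 M) (k : ℕ)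
    (x : TensorPower 𝔽 k M) :
    ∃ c : 𝔽, x = c • PiTensorProduct.tprod 𝔽 (fun _ : Fin k => b 0) := by
  induction x using PiTensorProduct.induction_on with
  | smul_tprod r f =>
      have hf : ∀ i, f i = b.repr (f i) 0 • b 0 := by
        intro i
        have h := b.sum_repr (f i)
        rw [Fin.sum_univ_one] at h
        exact h.symm
      refine ⟨r * ∏ i : Fin k, b.repr (f i) 0, ?_⟩
      conv_lhs => rw [show f = fun i => b.repr (f i) 0 • b 0 from funext hf]
      rw [MultilinearMap.map_smul_univ, smul_smul]
  | add x y hx hy =>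
      obtain ⟨cx, rfl⟩ := hx
      obtain ⟨cy, rfl⟩ := hy
      exact ⟨cx + cy, by rw [add_smul]⟩

lemma lpow_span (b : Module.Basis (Fin 1) 𝔽 L) (n : ℤ) (x : LPow 𝔽 L n) :
    ∃ c : 𝔽, x = c • genAux (b 0) (b.coord 0) n := by
  cases n with
  | ofNat k => exact span_pow b k x
  | negSucc k =>
      obtain ⟨c, hc⟩ := span_pow (b.dualBasis) (k + 1) x
      refine ⟨c, ?_⟩
      rw [hc, genAux_negSucc]
      have hd : (b.dualBasis 0 : Module.Dual 𝔽 L) = b.coord 0 := by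
        rw [Module.Basis.coe_dualBasis]
      simp only [hd]
      rfl

lemma powMap_gen {𝔽 : Type*} [Field 𝔽] {L₁ L₂ : Type*} [AddCommGroup L₁] [Module 𝔽 L₁]
    [AddCommGroup L₂] [Module 𝔽 L₂] (B : L₁ ≃ₗ[𝔽] L₂) (e : L₁) (ε : Module.Dual 𝔽 L₁)
    (n : ℤ) :
    powMap 𝔽 B n (genAux e ε n) =
      genAux (B e) (B.symm.toLinearMap.dualMap ε) n := by
  cases n with
  | ofNat k =>
      rw [genAux_ofNat, genAux_ofNat]
      show PiTensorProduct.map _ (PiTensorProduct.tprod 𝔽 _) = _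
      rw [PiTensorProduct.map_tprod]
      rfl
  | negSucc k =>
      rw [genAux_negSucc, genAux_negSucc]
      show PiTensorProduct.map _ (PiTensorProduct.tprod 𝔽 _) = _
      rw [PiTensorProduct.map_tprod]

end Aux

/-- The power construction is a functor from lines to dimensioned rings: `B^⊙` is a
morphism of dimensioned rings (slice-wise additive, multiplicative, unital) covering the
identity on `ℤ`, and `(C∘B)^⊙ = C^⊙ ∘ B^⊙`, `(id)^⊙ = id`. -/
theorem stmt13 (h₁ : Module.finrank 𝔽 L₁ = 1) (h₂ : Module.finrank 𝔽 L₂ = 1)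
    (mul₁ : ∀ m n : ℤ, LPow 𝔽 L₁ m →ₗ[𝔽] LPow 𝔽 L₁ n →ₗ[𝔽] LPow 𝔽 L₁ (m + n))
    (mul₂ : ∀ m n : ℤ, LPow 𝔽 L₂ m →ₗ[𝔽] LPow 𝔽 L₂ n →ₗ[𝔽] LPow 𝔽 L₂ (m + n))
    (hmul₁ : IsPowerMul 𝔽 mul₁) (hmul₂ : IsPowerMul 𝔽 mul₂)
    (B : L₁ ≃ₗ[𝔽] L₂) (C : L₂ ≃ₗ[𝔽] L₃) :
    (powMap 𝔽 B 0 (LPowOne 𝔽) = LPowOne 𝔽) ∧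
    (∀ (m n : ℤ) (x : LPow 𝔽 L₁ m) (y : LPow 𝔽 L₁ n),
      powMap 𝔽 B (m + n) (mul₁ m n x y) = mul₂ m n (powMap 𝔽 B m x) (powMap 𝔽 B n y)) ∧
    (∀ (n : ℤ) (x : LPow 𝔽 L₁ n),
      powMap 𝔽 (B.trans C) n x = powMap 𝔽 C n (powMap 𝔽 B n x)) ∧
    (∀ (n : ℤ) (x : LPow 𝔽 L n), powMap 𝔽 (LinearEquiv.refl 𝔽 L) n x = x) := by
  haveI : Module.Finite 𝔽 L₁ := Module.finite_of_finrank_eq_succ h₁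
  set b : Module.Basis (Fin 1) 𝔽 L₁ := Module.finBasisOfFinrankEq 𝔽 L₁ h₁ with hb
  have hεe : b.coord 0 (b 0) = 1 := by simp
  have hε₂e₂ : (B.symm.toLinearMap.dualMap (b.coord 0)) (B (b 0)) = 1 := by simp
  refine ⟨?_, ?_, ?_, ?_⟩
  · show PiTensorProduct.map _ (PiTensorProduct.tprod 𝔽 _) = _
    rw [PiTensorProduct.map_tprod]
    show PiTensorProduct.tprod 𝔽 _ = PiTensorProduct.tprod 𝔽 _
    congr 1
    funext i
    exact i.elim0
  · intro m n x y
    obtain ⟨a, rfl⟩ := lpow_span b m x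
    obtain ⟨c, rfl⟩ := lpow_span b n y
    simp only [map_smul, LinearMap.smul_apply]
    rw [key_all (mul := mul₁) hmul₁ hεe m n, powMap_gen, powMap_gen, powMap_gen,
      key_all (mul := mul₂) hmul₂ hε₂e₂ m n]
  · intro n x
    cases n with
    | ofNat k =>
        induction x using PiTensorProduct.induction_on with
        | smul_tprod r f =>
            show PiTensorProduct.map _ _ = PiTensorProduct.map _ (PiTensorProduct.map _ _)
            rw [map_smul, map_smul, map_smul, PiTensorProduct.map_tprod,
              PiTensorProduct.map_tprod, PiTensorProduct.map_tprod]
            rfl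
        | add u v hu hv =>
            show PiTensorProduct.map _ _ = PiTensorProduct.map _ (PiTensorProduct.map _ _)
            rw [map_add, map_add, map_add]
            exact congrArg₂ (· + ·) hu hv
    | negSucc k =>
        induction x using PiTensorProduct.induction_on with
        | smul_tprod r f =>
            show PiTensorProduct.map _ _ = PiTensorProduct.map _ (PiTensorProduct.map _ _)
            rw [map_smul, map_smul, map_smul, PiTensorProduct.map_tprod,
              PiTensorProduct.map_tprod, PiTensorProduct.map_tprod]
            rfl
        | add u v hu hv =>
            show PiTensorProduct.map _ _ = PiTensorProduct.map _ (PiTensorProduct.map _ _)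
            rw [map_add, map_add, map_add]
            exact congrArg₂ (· + ·) hu hv
  · intro n x
    cases n with
    | ofNat k =>
        induction x using PiTensorProduct.induction_on with
        | smul_tprod r f =>
            show PiTensorProduct.map _ _ = _
            rw [map_smul, PiTensorProduct.map_tprod]
            rfl
        | add u v hu hv =>
            show PiTensorProduct.map _ _ = _
            rw [map_add]
            exact congrArg₂ (· + ·) hu hv
    | negSucc k =>
        induction x using PiTensorProduct.induction_on with
        | smul_tprod r f =>
            show PiTensorProduct.map _ _ = _
            rw [map_smul, PiTensorProduct.map_tprod]
            rfl
        | add u v hu hv =>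
            show PiTensorProduct.map _ _ = _
            rw [map_add]
            exact congrArg₂ (· + ·) hu hv
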